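/- Let (X,P) be an effective symbolic space such that X is perfect (has no isolated points). Then (X,P) is effectively homeomorphic to the Cantor space equipped with an effective clopen enumeration: there exist an injective function Q : ℕ → Set (ℕ → Bool) whose range is exactly the set of all clopen subsets of the Cantor space and for which there exist computable functions f' : ℕ → ℕ and g' : ℕ × ℕ → ℕ with (ℕ → Bool) \ Q(n) = Q(f'(n)) and Q(n) ∩ Q(m) = Q(g'(n,m)) for all n, m, together with a homeomorphism h : X ≃ₜ (ℕ → Bool) and a computable function k : ℕ → ℕ such that h⁻¹(Q(n)) = P(k(n)) for every n. -/
import Mathlib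

set_option linter.unusedSectionVars false

section CantorAux

variable {X : Type} [TopologicalSpace X]

/-- Any nonempty clopen set in a perfect totally separated space splits into two
disjoint nonempty clopen pieces. -/
lemma cantorAux_split [TotallySeparatedSpace X]
    (hperfect : ∀ x : X, (nhdsWithin x {x}ᶜ).NeBot)
    (U : Set X) (hU : IsClopen U) (hne : U.Nonempty) :
    ∃ V W : Set X, IsClopen V ∧ IsClopen W ∧ V.Nonempty ∧ W.Nonempty ∧
      V ∪ W = U ∧ Disjoint V W := by
  obtain ⟨x, hx⟩ := hne
  have hUx : U ∈ nhdsWithin x {x}ᶜ :=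
    mem_nhdsWithin_of_mem_nhds (hU.2.mem_nhds hx)
  haveI := hperfect x
  obtain ⟨y, hyU, hyx⟩ :
      (U ∩ {x}ᶜ).Nonempty :=
    Filter.nonempty_of_mem (Filter.inter_mem hUx self_mem_nhdsWithin)
  have hxy : x ≠ y := fun h => hyx (by simp [h.symm])
  obtain ⟨Z, hZ, hxZ, hyZ⟩ := exists_isClopen_of_totally_separated hxy
  refine ⟨U ∩ Z, U ∩ Zᶜ, hU.inter hZ, hU.inter hZ.compl, ⟨x, hx, hxZ⟩, ⟨y, hyU, hyZ⟩, ?_, ?_⟩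
  · rw [← Set.inter_union_distrib_left, Set.union_compl_self, Set.inter_univ]
  · exact Set.disjoint_of_subset (Set.inter_subset_right) (Set.inter_subset_right)
      (disjoint_compl_right)

/-- The binary scheme of cells: `cantorCell ch r` is the cell indexed by the (reversed)
binary string `r`, obtained by iterating the chopping function `ch`. -/
def cantorCell (ch : ℕ → Set X → Set X × Set X) : List Bool → Set X
  | [] => Set.univ
  | b :: t => if b then (ch t.length (cantorCell ch t)).2 else (ch t.length (cantorCell ch t)).1

/-- Specification of a chopping function: it splits any nonempty clopen set into two
disjoint nonempty clopen pieces each of which is on one side of `P j`. -/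
def CantorChopSpec (P : ℕ → Set X) (ch : ℕ → Set X → Set X × Set X) : Prop :=
  ∀ j U, IsClopen U → U.Nonempty →
    IsClopen (ch j U).1 ∧ IsClopen (ch j U).2 ∧ (ch j U).1.Nonempty ∧ (ch j U).2.Nonempty ∧
    (ch j U).1 ∪ (ch j U).2 = U ∧ Disjoint (ch j U).1 (ch j U).2 ∧
    ((ch j U).1 ⊆ P j ∨ (ch j U).1 ⊆ (P j)ᶜ) ∧ ((ch j U).2 ⊆ P j ∨ (ch j U).2 ⊆ (P j)ᶜ)

variable {P : ℕ → Set X} {ch : ℕ → Set X → Set X × Set X}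

lemma cantorCell_cons_true (t : List Bool) :
    cantorCell ch (true :: t) = (ch t.length (cantorCell ch t)).2 := by
  simp [cantorCell]

lemma cantorCell_cons_false (t : List Bool) :
    cantorCell ch (false :: t) = (ch t.length (cantorCell ch t)).1 := by
  simp [cantorCell]

variable [Nonempty X]

lemma cantorCell_good (h : CantorChopSpec P ch) :
    ∀ r : List Bool, IsClopen (cantorCell ch r) ∧ (cantorCell ch r).Nonempty ∧
      ∀ i < r.length, cantorCell ch r ⊆ P i ∨ cantorCell ch r ⊆ (P i)ᶜ := by
  intro r
  induction r with
  | nil => exact ⟨isClopen_univ, Set.univ_nonempty, fun i hi => absurd hi (by simp)⟩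
  | cons b t ih =>
    obtain ⟨hcl, hne, hsides⟩ := ih
    obtain ⟨h1, h2, h3, h4, h5, h6, h7, h8⟩ := h t.length _ hcl hne
    have hsub : cantorCell ch (b :: t) ⊆ cantorCell ch t := by
      cases b
      · rw [cantorCell_cons_false]; exact Set.subset_union_left.trans h5.subset
      · rw [cantorCell_cons_true]; exact Set.subset_union_right.trans h5.subset
    refine ⟨?_, ?_, ?_⟩
    · cases b
      · rw [cantorCell_cons_false]; exact h1
      · rw [cantorCell_cons_true]; exact h2
    · cases b
      · rw [cantorCell_cons_false]; exact h3
      · rw [cantorCell_cons_true]; exact h4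
    · intro i hi
      rcases Nat.lt_succ_iff_lt_or_eq.mp (by simpa using hi) with hi' | rfl
      · rcases hsides i hi' with hs | hs
        · exact Or.inl (hsub.trans hs)
        · exact Or.inr (hsub.trans hs)
      · cases b
        · rw [cantorCell_cons_false]; exact h7
        · rw [cantorCell_cons_true]; exact h8

lemma cantorCell_cons_subset (h : CantorChopSpec P ch) (b : Bool) (t : List Bool) :
    cantorCell ch (b :: t) ⊆ cantorCell ch t := by
  obtain ⟨hcl, hne, _⟩ := cantorCell_good h t
  obtain ⟨_, _, _, _, h5, _, _, _⟩ := h t.length _ hcl hne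
  cases b
  · rw [cantorCell_cons_false]; exact Set.subset_union_left.trans h5.subset
  · rw [cantorCell_cons_true]; exact Set.subset_union_right.trans h5.subset

open Classical in
/-- The (reversed) prefix of the branch of `x` in the binary scheme. -/
noncomputable def cantorPfx (ch : ℕ → Set X → Set X × Set X) (x : X) : ℕ → List Bool
  | 0 => []
  | n + 1 =>
      (if x ∈ (ch n (cantorCell ch (cantorPfx ch x n))).2 then true else false) :: cantorPfx ch x n

open Classical in
/-- The coding map to Cantor space. -/
noncomputable def cantorMap (ch : ℕ → Set X → Set X × Set X) (x : X) (n : ℕ) : Bool :=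
  if x ∈ (ch n (cantorCell ch (cantorPfx ch x n))).2 then true else false

omit [Nonempty X] in
lemma cantorPfx_length (x : X) (n : ℕ) : (cantorPfx ch x n).length = n := by
  induction n with
  | zero => rfl
  | succ n ih => simp only [cantorPfx, List.length_cons, ih]

omit [Nonempty X] in
lemma cantorPfx_succ (x : X) (n : ℕ) :
    cantorPfx ch x (n + 1) = cantorMap ch x n :: cantorPfx ch x n := rfl

omit [Nonempty X] in
lemma cantorMap_eq_true {x : X} {n : ℕ}
    (hx : x ∈ (ch n (cantorCell ch (cantorPfx ch x n))).2) : cantorMap ch x n = true := by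
  simp [cantorMap, hx]

omit [Nonempty X] in
lemma cantorMap_eq_false {x : X} {n : ℕ}
    (hx : x ∉ (ch n (cantorCell ch (cantorPfx ch x n))).2) : cantorMap ch x n = false := by
  simp [cantorMap, hx]

lemma mem_cantorCell_pfx (h : CantorChopSpec P ch) (x : X) :
    ∀ n, x ∈ cantorCell ch (cantorPfx ch x n) := by
  intro n
  induction n with
  | zero => exact Set.mem_univ x
  | succ n ih =>
    obtain ⟨hcl, hne, _⟩ := cantorCell_good h (cantorPfx ch x n)
    obtain ⟨_, _, _, _, h5, _, _, _⟩ := h n _ hcl hne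
    rw [cantorPfx_succ]
    by_cases hx2 : x ∈ (ch n (cantorCell ch (cantorPfx ch x n))).2
    · rw [cantorMap_eq_true hx2, cantorCell_cons_true, cantorPfx_length]
      exact hx2
    · rw [cantorMap_eq_false hx2, cantorCell_cons_false, cantorPfx_length]
      have : x ∈ (ch (cantorPfx ch x n).length (cantorCell ch (cantorPfx ch x n))).1 ∪
          (ch (cantorPfx ch x n).length (cantorCell ch (cantorPfx ch x n))).2 := by
        rw [cantorPfx_length, h5]; exact ih
      rw [cantorPfx_length] at this
      rcases this with h' | h'
      · exact h'
      · exact absurd h' hx2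

/-- Key fact: within a cell of depth `n`, the prefix function of depth `n` is constant. -/
lemma cantorPfx_locally_constant (h : CantorChopSpec P ch) :
    ∀ (n : ℕ) (x y : X), y ∈ cantorCell ch (cantorPfx ch x n) →
      cantorPfx ch y n = cantorPfx ch x n := by
  intro n
  induction n with
  | zero => intro x y _; rfl
  | succ n ih =>
    intro x y hy
    obtain ⟨hcl, hne, _⟩ := cantorCell_good h (cantorPfx ch x n)
    obtain ⟨_, _, _, _, h5, h6, _, _⟩ := h n _ hcl hne
    rw [cantorPfx_succ] at hy
    have hyn : cantorPfx ch y n = cantorPfx ch x n :=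
      ih x y (cantorCell_cons_subset h _ _ hy)
    rw [cantorPfx_succ, cantorPfx_succ, hyn]
    congr 1
    cases hbb : cantorMap ch x n
    · rw [hbb, cantorCell_cons_false, cantorPfx_length] at hy
      have hy2 : y ∉ (ch n (cantorCell ch (cantorPfx ch y n))).2 := by
        rw [hyn]
        exact fun h2 => (h6.ne_of_mem hy h2) rfl
      exact cantorMap_eq_false hy2
    · rw [hbb, cantorCell_cons_true, cantorPfx_length] at hy
      have hy2 : y ∈ (ch n (cantorCell ch (cantorPfx ch y n))).2 := by rw [hyn]; exact hy
      exact cantorMap_eq_true hy2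

end CantorAux

/-- Every perfect effective symbolic space is effectively homeomorphic to the Cantor space
equipped with an effective clopen enumeration. -/
theorem perfect_effective_symbolic_space_effectively_homeomorphic_cantor
    (X : Type) [TopologicalSpace X] [Nonempty X] [CompactSpace X]
    [TopologicalSpace.MetrizableSpace X] [TotallyDisconnectedSpace X]
    (hperfect : ∀ x : X, (nhdsWithin x {x}ᶜ).NeBot)
    (P : ℕ → Set X) (hPinj : Function.Injective P)
    (hPrange : Set.range P = {U : Set X | IsClopen U})
    (f : ℕ → ℕ) (g : ℕ × ℕ → ℕ) (hf : Computable f) (hg : Computable g)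
    (hcompl : ∀ n, (P n)ᶜ = P (f n))
    (hinter : ∀ n m, P n ∩ P m = P (g (n, m))) :
    ∃ Q : ℕ → Set (ℕ → Bool),
      Function.Injective Q ∧
      Set.range Q = {U : Set (ℕ → Bool) | IsClopen U} ∧
      (∃ (f' : ℕ → ℕ) (g' : ℕ × ℕ → ℕ), Computable f' ∧ Computable g' ∧
        (∀ n, (Q n)ᶜ = Q (f' n)) ∧ (∀ n m, Q n ∩ Q m = Q (g' (n, m)))) ∧
      ∃ (h : X ≃ₜ (ℕ → Bool)) (k : ℕ → ℕ), Computable k ∧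
        ∀ n, (⇑h) ⁻¹' (Q n) = P (k n) := by
  -- clopen sets are exactly the `P n`
  have hPclopen : ∀ n, IsClopen (P n) := fun n => by
    have : P n ∈ Set.range P := Set.mem_range_self n
    rwa [hPrange] at this
  have hrange : ∀ U : Set X, IsClopen U → ∃ n, P n = U := fun U hU => by
    have : U ∈ Set.range P := by rw [hPrange]; exact hU
    exact this
  -- existence of the chopping function
  have Hchop : ∀ (j : ℕ) (U : Set X), ∃ p : Set X × Set X,
      IsClopen U → U.Nonempty →
      IsClopen p.1 ∧ IsClopen p.2 ∧ p.1.Nonempty ∧ p.2.Nonempty ∧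
      p.1 ∪ p.2 = U ∧ Disjoint p.1 p.2 ∧
      (p.1 ⊆ P j ∨ p.1 ⊆ (P j)ᶜ) ∧ (p.2 ⊆ P j ∨ p.2 ⊆ (P j)ᶜ) := by
    intro j U
    by_cases hU : IsClopen U ∧ U.Nonempty
    · obtain ⟨hUcl, hUne⟩ := hU
      by_cases h1 : (U ∩ P j).Nonempty
      · by_cases h2 : (U ∩ (P j)ᶜ).Nonempty
        · refine ⟨(U ∩ P j, U ∩ (P j)ᶜ), fun _ _ => ?_⟩
          refine ⟨hUcl.inter (hPclopen j), hUcl.inter (hPclopen j).compl, h1, h2, ?_, ?_, ?_, ?_⟩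
          · rw [← Set.inter_union_distrib_left, Set.union_compl_self, Set.inter_univ]
          · exact Set.disjoint_of_subset Set.inter_subset_right Set.inter_subset_right
              disjoint_compl_right
          · exact Or.inl Set.inter_subset_right
          · exact Or.inr Set.inter_subset_right
        · -- U ⊆ P j : split U arbitrarily
          have hUP : U ⊆ P j := by
            intro x hx
            by_contra hx'
            exact h2 ⟨x, hx, hx'⟩
          obtain ⟨V, W, hV, hW, hVne, hWne, hVW, hdisj⟩ :=
            cantorAux_split hperfect U hUcl hUne
          exact ⟨(V, W), fun _ _ => ⟨hV, hW, hVne, hWne, hVW, hdisj,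
            Or.inl ((Set.subset_union_left.trans hVW.subset).trans hUP),
            Or.inl ((Set.subset_union_right.trans hVW.subset).trans hUP)⟩⟩
      · -- U ⊆ (P j)ᶜ
        have hUP : U ⊆ (P j)ᶜ := by
          intro x hx
          by_contra hx'
          exact h1 ⟨x, hx, not_not.mp hx'⟩
        obtain ⟨V, W, hV, hW, hVne, hWne, hVW, hdisj⟩ :=
          cantorAux_split hperfect U hUcl hUne
        exact ⟨(V, W), fun _ _ => ⟨hV, hW, hVne, hWne, hVW, hdisj,
          Or.inr ((Set.subset_union_left.trans hVW.subset).trans hUP),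
          Or.inr ((Set.subset_union_right.trans hVW.subset).trans hUP)⟩⟩
    · exact ⟨(∅, ∅), fun hcl hne => absurd ⟨hcl, hne⟩ hU⟩
  choose ch hch using Hchop
  have hspec : CantorChopSpec P ch := fun j U hU hne => hch j U hU hne
  -- the coding map
  set e : X → ℕ → Bool := cantorMap ch with he
  -- e is continuous
  have hcont : Continuous e := by
    refine continuous_pi fun n => ?_
    refine IsLocallyConstant.continuous ?_
    rw [IsLocallyConstant.iff_exists_open]
    intro x
    refine ⟨cantorCell ch (cantorPfx ch x (n + 1)),
      (cantorCell_good hspec _).1.2, mem_cantorCell_pfx hspec x (n + 1), fun y hy => ?_⟩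
    have hp := cantorPfx_locally_constant hspec (n + 1) x y hy
    rw [cantorPfx_succ, cantorPfx_succ] at hp
    injection hp
  -- e is injective
  have hinj : Function.Injective e := by
    intro x y hxy
    by_contra hne
    have hpfx : ∀ n, cantorPfx ch y n = cantorPfx ch x n := by
      intro n
      induction n with
      | zero => rfl
      | succ n ih =>
        rw [cantorPfx_succ, cantorPfx_succ, ih]
        congr 1
        have : e x n = e y n := by rw [hxy]
        exact this.symm
    obtain ⟨U, hUcl, hxU, hyU⟩ := exists_isClopen_of_totally_separated hne
    obtain ⟨m, hm⟩ := hrange U hUcl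
    have hxC := mem_cantorCell_pfx hspec x (m + 1)
    have hyC := mem_cantorCell_pfx hspec y (m + 1)
    rw [hpfx] at hyC
    have hsides := (cantorCell_good hspec (cantorPfx ch x (m + 1))).2.2 m
      (by rw [cantorPfx_length]; omega)
    rcases hsides with hs | hs
    · exact hyU (hm ▸ hs hyC)
    · exact (hm ▸ hs hxC) hxU
  -- e is surjective
  have hsurj : Function.Surjective e := by
    intro σ
    -- the reversed prefixes of σ
    let rp : ℕ → List Bool := fun n => Nat.rec [] (fun m ih => σ m :: ih) n
    have rp_succ : ∀ n, rp (n + 1) = σ n :: rp n := fun n => rfl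
    have hKne : ∀ n, (cantorCell ch (rp n)).Nonempty :=
      fun n => (cantorCell_good hspec (rp n)).2.1
    have hKcl : ∀ n, IsClosed (cantorCell ch (rp n)) :=
      fun n => (cantorCell_good hspec (rp n)).1.1
    have hKsub : ∀ n, cantorCell ch (rp (n + 1)) ⊆ cantorCell ch (rp n) := by
      intro n
      rw [rp_succ]
      exact cantorCell_cons_subset hspec _ _
    obtain ⟨x, hx⟩ := IsCompact.nonempty_iInter_of_sequence_nonempty_isCompact_isClosed
      (fun n => cantorCell ch (rp n)) hKsub hKne
      ((hKcl 0).isCompact) hKcl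
    have hxall : ∀ n, x ∈ cantorCell ch (rp n) := fun n => Set.mem_iInter.mp hx n
    have rp_len : ∀ n, (rp n).length = n := by
      intro n; induction n with
      | zero => rfl
      | succ n ih => rw [rp_succ, List.length_cons, ih]
    have hpfx : ∀ n, cantorPfx ch x n = rp n := by
      intro n
      induction n with
      | zero => rfl
      | succ n ih =>
        have hxn1 : x ∈ cantorCell ch (σ n :: rp n) := by
          have := hxall (n + 1); rwa [rp_succ] at this
        obtain ⟨hcl, hne, _⟩ := cantorCell_good hspec (rp n)
        obtain ⟨_, _, _, _, h5, h6, _, _⟩ := hspec n _ hcl hne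
        rw [cantorPfx_succ, ih, rp_succ]
        congr 1
        cases hb : σ n
        · rw [hb, cantorCell_cons_false, rp_len] at hxn1
          have hx2 : x ∉ (ch n (cantorCell ch (cantorPfx ch x n))).2 := by
            rw [ih]
            exact fun h2 => (h6.ne_of_mem hxn1 h2) rfl
          exact cantorMap_eq_false hx2
        · rw [hb, cantorCell_cons_true, rp_len] at hxn1
          have hx2 : x ∈ (ch n (cantorCell ch (cantorPfx ch x n))).2 := by
            rw [ih]; exact hxn1
          exact cantorMap_eq_true hx2
    refine ⟨x, ?_⟩
    funext n
    have hp := hpfx (n + 1)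
    rw [cantorPfx_succ, rp_succ] at hp
    injection hp
  -- the homeomorphism
  let eqv : X ≃ (ℕ → Bool) := Equiv.ofBijective e ⟨hinj, hsurj⟩
  let h : X ≃ₜ (ℕ → Bool) := Continuous.homeoOfEquivCompactToT2 (f := eqv) hcont
  refine ⟨fun n => h '' (P n), ?_, ?_, ⟨f, g, hf, hg, ?_, ?_⟩, h, id, Computable.id, ?_⟩
  · intro a b hab
    exact hPinj (Set.image_injective.mpr h.injective hab)
  · ext U
    simp only [Set.mem_range, Set.mem_setOf_eq]
    constructor
    · rintro ⟨n, rfl⟩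
      rw [show h '' (P n) = h.symm ⁻¹' (P n) from congrFun (Homeomorph.preimage_symm h).symm _]
      exact (hPclopen n).preimage h.symm.continuous
    · intro hU
      obtain ⟨n, hn⟩ := hrange (h ⁻¹' U) (hU.preimage h.continuous)
      exact ⟨n, by rw [hn, Homeomorph.image_preimage]⟩
  · intro n
    rw [← Set.image_compl_eq h.bijective, hcompl]
  · intro n m
    rw [← Set.image_inter h.injective, hinter]
  · intro n
    exact Set.preimage_image_eq _ h.injective
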